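/- Every inp-minimal ordered group is abelian. That is, let G be a group equipped with a linear order ≤ such that a ≤ b implies c·a·d ≤ c·b·d for all a, b, c, d ∈ G, regarded as a structure in the language of ordered groups {·, ⁻¹, 1, ≤}. If this structure is inp-minimal, then G is commutative. -/

import Mathlib

open FirstOrder FirstOrder.Language

universe u v w

/-- `N` carries an inp-pattern of length two (in a single free variable). -/
def HasInpPattern (L : FirstOrder.Language.{v, w}) (N : Type*) [L.Structure N] : Prop :=
  ∃ (m₁ m₂ k₁ k₂ : ℕ) (φ : L.Formula (Unit ⊕ Fin m₁)) (ψ : L.Formula (Unit ⊕ Fin m₂))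
    (a : ℕ → Fin m₁ → N) (b : ℕ → Fin m₂ → N),
    2 ≤ k₁ ∧ 2 ≤ k₂ ∧
    (∀ (c : N) (s : Finset ℕ),
      (∀ i ∈ s, φ.Realize (Sum.elim (fun _ => c) (a i))) → s.card < k₁) ∧
    (∀ (c : N) (s : Finset ℕ),
      (∀ j ∈ s, ψ.Realize (Sum.elim (fun _ => c) (b j))) → s.card < k₂) ∧
    (∀ i j : ℕ, ∃ c : N,
      φ.Realize (Sum.elim (fun _ => c) (a i)) ∧ ψ.Realize (Sum.elim (fun _ => c) (b j)))

/-- `M` is inp-minimal: no structure elementarily equivalent to `M` carries an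
inp-pattern of length two in a single free variable. -/
def IsInpMinimal (L : FirstOrder.Language.{v, w}) (M : Type u) [L.Structure M] : Prop :=
  ∀ (N : Type (max u v w)) (S : L.Structure N),
    L.completeTheory M = @Language.completeTheory L N S → ¬ @HasInpPattern L N S

/-- The first-order language of ordered groups `{·, ⁻¹, 1, ≤}`. -/
def ogLang : Language where
  Functions := fun n =>
    match n with
    | 0 => Unit
    | 1 => Unit
    | 2 => Unit
    | _ => Empty
  Relations := fun n =>
    match n with
    | 2 => Unit
    | _ => Empty

/-- A group with an order, regarded as an `ogLang`-structure. -/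
instance ogLangStructure (G : Type u) [Group G] [LE G] : ogLang.Structure G where
  funMap {n} f :=
    match n, f with
    | 0, _ => fun _ => (1 : G)
    | 1, _ => fun x => (x 0)⁻¹
    | 2, _ => fun x => x 0 * x 1
    | (_ + 3), f => Empty.elim f
  RelMap {n} r :=
    match n, r with
    | 0, r => Empty.elim r
    | 1, r => Empty.elim r
    | 2, _ => fun x => x 0 ≤ x 1
    | (_ + 3), r => Empty.elim r
/-! If `a` and `b` do not commute, the formulas `x · bⁱ ⇌ a` (row index `i`) and `aʲ · x ⇌ b`
(row index `j`), where `⇌` means "commutes with", form an inp-pattern of depth two in `G` itself: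
the path `(i, j)` is realised by `x = a⁻ʲ b⁻ⁱ`, while two distinct members `i ≠ i'` of the first
row force `b ^ (i' - i)`, hence `b` (roots are unique in a bi-ordered group), to commute with `a`;
symmetrically for the second row. -/

section TorsionFree

variable {G : Type*} [Group G]

theorem isMulTorsionFree_of_mul_le_mul [LinearOrder G]
    (hord : ∀ a b c d : G, a ≤ b → c * a * d ≤ c * b * d) : IsMulTorsionFree G :=
  have : MulLeftMono G := ⟨fun c a b h => by simpa using hord a b c 1 h⟩
  have : MulRightMono G := ⟨fun c a b h => by simpa using hord a b 1 c h⟩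
  inferInstance

variable [IsMulTorsionFree G]

theorem Commute.of_zpow_left {x y : G} {n : ℤ} (hn : n ≠ 0) (h : Commute (x ^ n) y) :
    Commute x y := by
  have hconj : (y * x * y⁻¹) ^ n = x ^ n := by
    rw [conj_zpow, ← h.eq, mul_inv_cancel_right]
  exact (mul_inv_eq_iff_eq_mul.mp (zpow_left_injective hn hconj)).symm

theorem commute_of_commute_mul_zpow {a b c : G} {i j : ℤ} (hij : i ≠ j)
    (hi : Commute (c * b ^ i) a) (hj : Commute (c * b ^ j) a) : Commute b a := by
  have hdiff : (c * b ^ i)⁻¹ * (c * b ^ j) = b ^ (j - i) := by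
    rw [mul_inv_rev, mul_assoc, inv_mul_cancel_left, ← zpow_neg, ← zpow_add, neg_add_eq_sub]
  have := hi.inv_left.mul_left hj
  rw [hdiff] at this
  exact this.of_zpow_left (sub_ne_zero.mpr hij.symm)

theorem commute_of_commute_zpow_mul {a b c : G} {i j : ℤ} (hij : i ≠ j)
    (hi : Commute (a ^ i * c) b) (hj : Commute (a ^ j * c) b) : Commute a b := by
  refine commute_of_commute_mul_zpow (c := c⁻¹) (neg_injective.ne hij) ?_ ?_ <;>
    rw [zpow_neg, ← mul_inv_rev]
  exacts [hi.inv_left, hj.inv_left]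

end TorsionFree

namespace ogLang

variable {α : Type*}

def mulTerm (t₁ t₂ : ogLang.Term α) : ogLang.Term α :=
  Term.func (show ogLang.Functions 2 from ()) ![t₁, t₂]

def commuteFormula (t₁ t₂ : ogLang.Term α) : ogLang.Formula α :=
  (mulTerm t₁ t₂).equal (mulTerm t₂ t₁)

variable {G : Type*} [Group G] [LE G]

@[simp]
theorem realize_mulTerm (v : α → G) (t₁ t₂ : ogLang.Term α) :
    (mulTerm t₁ t₂).realize v = t₁.realize v * t₂.realize v :=
  rfl

@[simp]
theorem realize_commuteFormula (v : α → G) (t₁ t₂ : ogLang.Term α) :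
    (commuteFormula t₁ t₂).Realize v ↔ Commute (t₁.realize v) (t₂.realize v) :=
  Formula.realize_equal

end ogLang

section Pattern

open ogLang

variable {G : Type*} [Group G] [LE G]

def mulRightCommuteFormula : ogLang.Formula (Unit ⊕ Fin 2) :=
  commuteFormula (mulTerm (Term.var (.inl ())) (Term.var (.inr 0))) (Term.var (.inr 1))

def mulLeftCommuteFormula : ogLang.Formula (Unit ⊕ Fin 2) :=
  commuteFormula (mulTerm (Term.var (.inr 0)) (Term.var (.inl ()))) (Term.var (.inr 1))

@[simp]
theorem realize_mulRightCommuteFormula (c : G) (p : Fin 2 → G) :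
    mulRightCommuteFormula.Realize (Sum.elim (fun _ => c) p) ↔ Commute (c * p 0) (p 1) :=
  Iff.rfl

@[simp]
theorem realize_mulLeftCommuteFormula (c : G) (p : Fin 2 → G) :
    mulLeftCommuteFormula.Realize (Sum.elim (fun _ => c) p) ↔ Commute (p 0 * c) (p 1) :=
  Iff.rfl

theorem Finset.card_lt_two_of_forall {β : Type*} {P : β → Prop} (hP : ∀ i j, P i → P j → i = j)
    (s : Finset β) (hs : ∀ i ∈ s, P i) : s.card < 2 :=
  Nat.lt_succ_of_le (Finset.card_le_one.mpr fun i hi j hj => hP i j (hs i hi) (hs j hj))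

theorem hasInpPattern_of_not_commute [IsMulTorsionFree G] {a b : G} (hab : ¬Commute a b) :
    HasInpPattern ogLang G := by
  refine ⟨2, 2, 2, 2, mulRightCommuteFormula, mulLeftCommuteFormula,
    fun i => ![b ^ (i : ℤ), a], fun j => ![a ^ (j : ℤ), b], le_rfl, le_rfl,
    fun c => Finset.card_lt_two_of_forall fun i i' hi hi' => ?_,
    fun c => Finset.card_lt_two_of_forall fun j j' hj hj' => ?_,
    fun i j => ⟨a ^ (-j : ℤ) * b ^ (-i : ℤ), ?_⟩⟩
  · by_contra hne
    simp only [realize_mulRightCommuteFormula, Matrix.cons_val_zero, Matrix.cons_val_one] at hi hi'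
    exact hab (commute_of_commute_mul_zpow (by exact_mod_cast hne) hi hi').symm
  · by_contra hne
    simp only [realize_mulLeftCommuteFormula, Matrix.cons_val_zero, Matrix.cons_val_one] at hj hj'
    exact hab (commute_of_commute_zpow_mul (by exact_mod_cast hne) hj hj')
  · simp only [realize_mulRightCommuteFormula, realize_mulLeftCommuteFormula,
      Matrix.cons_val_zero, Matrix.cons_val_one, zpow_neg, inv_mul_cancel_right,
      mul_inv_cancel_left]
    exact ⟨((Commute.refl a).zpow_left _).inv_left, ((Commute.refl b).zpow_left _).inv_left⟩

end Pattern

theorem statement_1 (G : Type u) [Group G] [LinearOrder G]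
    (hord : ∀ a b c d : G, a ≤ b → c * a * d ≤ c * b * d)
    (hG : IsInpMinimal ogLang G) :
    ∀ a b : G, a * b = b * a := by
  have := isMulTorsionFree_of_mul_le_mul hord
  intro a b
  by_contra hab
  exact hG G _ rfl (hasInpPattern_of_not_commute hab)
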